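/- arXiv:1702.04004 — 4 statements merged into one kernel-verified Lean document; each statement's English description precedes it below -/
import Mathlib

section
/- If r ≠ 0, the matrix exponential of M is given in closed form by exp(M) = Id + (sinh(r)/r) · M + ((cosh(r) − 1)/r²) · M², where Id is the 4×4 identity matrix. -/
/-! If `M ^ 3 = r ^ 2 • M` then `M ^ (2k+1) = r ^ (2k) • M` and `M ^ (2k+2) = r ^ (2k) • M ^ 2`, so
the odd part of the exponential series of `M` is the sinh series of `r` divided by `r`, times `M`,
and the even part is `1` plus the tail of the cosh series divided by `r ^ 2`, times `M ^ 2`.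
The boost generator satisfies this cubic relation with `r ^ 2 = dx ^ 2 + dy ^ 2 + dz ^ 2`. -/

noncomputable def lorentzBoostGen (dx dy dz : ℝ) : Matrix (Fin 4) (Fin 4) ℝ :=
  !![0, 0, 0, dx;
     0, 0, 0, dy;
     0, 0, 0, dz;
     dx, dy, dz, 0]

open scoped Nat

section PowThree

variable {R A : Type*} [CommSemiring R] [Semiring A] [Algebra R A] {M : A} {s : R}

theorem pow_two_mul_add_one_of_pow_three_eq_smul (h : M ^ 3 = s • M) (k : ℕ) :
    M ^ (2 * k + 1) = s ^ k • M := by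
  induction k with
  | zero => simp
  | succ k ih =>
    calc M ^ (2 * (k + 1) + 1) = M ^ (2 * k + 1) * M ^ 2 := by rw [← pow_add]; ring_nf
      _ = s ^ k • M ^ 3 := by rw [ih, smul_mul_assoc, ← pow_succ']
      _ = s ^ (k + 1) • M := by rw [h, smul_smul, ← pow_succ]

theorem pow_two_mul_add_two_of_pow_three_eq_smul (h : M ^ 3 = s • M) (k : ℕ) :
    M ^ (2 * k + 2) = s ^ k • M ^ 2 := by
  rw [pow_succ, pow_two_mul_add_one_of_pow_three_eq_smul h, smul_mul_assoc, ← pow_two]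

end PowThree

section ExpOfCubic

open Real

variable {A : Type*} [Ring A] [Algebra ℝ A] [TopologicalSpace A] [ContinuousSMul ℝ A]
  {M : A} {r : ℝ}

theorem hasSum_odd_exp_series_of_pow_three_eq_sq_smul (h : M ^ 3 = r ^ 2 • M) (hr : r ≠ 0) :
    HasSum (fun k : ℕ => ((2 * k + 1)! : ℝ)⁻¹ • M ^ (2 * k + 1)) ((sinh r / r) • M) := by
  convert ((hasSum_sinh r).div_const r).smul_const M using 2 with k
  rw [pow_two_mul_add_one_of_pow_three_eq_smul h, smul_smul, ← pow_mul, pow_succ]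
  field_simp

theorem hasSum_even_exp_series_of_pow_three_eq_sq_smul [IsTopologicalAddGroup A] (h : M ^ 3 = r ^ 2 • M) (hr : r ≠ 0) :
    HasSum (fun k : ℕ => ((2 * k)! : ℝ)⁻¹ • M ^ (2 * k))
      (1 + ((cosh r - 1) / r ^ 2) • M ^ 2) := by
  have hcosh_tail : HasSum (fun k : ℕ => r ^ (2 * (k + 1)) / (2 * (k + 1))!) (cosh r - 1) := by
    rw [hasSum_nat_add_iff (f := fun k : ℕ => r ^ (2 * k) / (2 * k)!) 1]
    simpa using hasSum_cosh r
  have htail : HasSum (fun k : ℕ => ((2 * (k + 1))! : ℝ)⁻¹ • M ^ (2 * (k + 1)))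
      (((cosh r - 1) / r ^ 2) • M ^ 2) := by
    convert (hcosh_tail.div_const (r ^ 2)).smul_const (M ^ 2) using 2 with k
    rw [mul_add_one, pow_two_mul_add_two_of_pow_three_eq_smul h, smul_smul, ← pow_mul, pow_add]
    field_simp
  rw [add_comm]
  simpa using (hasSum_nat_add_iff (f := fun k : ℕ => ((2 * k)! : ℝ)⁻¹ • M ^ (2 * k)) 1).mp htail

theorem exp_eq_of_pow_three_eq_sq_smul [IsTopologicalRing A] [T2Space A]
    (h : M ^ 3 = r ^ 2 • M) (hr : r ≠ 0) :
    NormedSpace.exp M = 1 + (sinh r / r) • M + ((cosh r - 1) / r ^ 2) • M ^ 2 := by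
  have hseries := HasSum.even_add_odd (f := fun n : ℕ => (n ! : ℝ)⁻¹ • M ^ n)
    (hasSum_even_exp_series_of_pow_three_eq_sq_smul h hr)
    (hasSum_odd_exp_series_of_pow_three_eq_sq_smul h hr)
  rw [congrFun (NormedSpace.exp_eq_tsum ℝ) M, hseries.tsum_eq, add_right_comm]

end ExpOfCubic

theorem lorentzBoostGen_pow_three (dx dy dz : ℝ) :
    lorentzBoostGen dx dy dz ^ 3 = (dx ^ 2 + dy ^ 2 + dz ^ 2) • lorentzBoostGen dx dy dz := by
  ext i j
  fin_cases i <;> fin_cases j <;>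
    simp [lorentzBoostGen, pow_succ, Matrix.mul_apply, Fin.sum_univ_four, add_assoc]
  all_goals ring

theorem stmt_3 (dx dy dz : ℝ) (hr : Real.sqrt (dx ^ 2 + dy ^ 2 + dz ^ 2) ≠ 0) :
    NormedSpace.exp (lorentzBoostGen dx dy dz) =
      1 + (Real.sinh (Real.sqrt (dx ^ 2 + dy ^ 2 + dz ^ 2)) /
            Real.sqrt (dx ^ 2 + dy ^ 2 + dz ^ 2)) • lorentzBoostGen dx dy dz +
        ((Real.cosh (Real.sqrt (dx ^ 2 + dy ^ 2 + dz ^ 2)) - 1) /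
            Real.sqrt (dx ^ 2 + dy ^ 2 + dz ^ 2) ^ 2) • (lorentzBoostGen dx dy dz) ^ 2 := by
  refine exp_eq_of_pow_three_eq_sq_smul ?_ hr
  rw [Real.sq_sqrt (by positivity)]
  exact lorentzBoostGen_pow_three dx dy dz
end

section
/- The matrix exponential exp(M) is a Lorentz transformation: it satisfies exp(M)ᵀ · J · exp(M) = J, where J is the diagonal matrix diag(1, 1, 1, −1). -/
/-!
The generator `M` satisfies `Mᵀ J + J M = 0`, i.e. `J` intertwines `M` with `-Mᵀ`. Intertwining
passes to every power and hence to the exponential series, so `J exp M = exp (-Mᵀ) J`; since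
`exp (-Mᵀ)` is the inverse of `exp Mᵀ = (exp M)ᵀ`, this is `(exp M)ᵀ J exp M = J`.
-/

open Matrix

namespace Matrix

variable {m 𝕂 : Type*} [Fintype m] [DecidableEq m] [RCLike 𝕂]

theorem exp_neg_mul_mul_exp_of_semiconjBy {J A B : Matrix m m 𝕂} (h : SemiconjBy J A B) :
    NormedSpace.exp (-B) * J * NormedSpace.exp A = J := by
  open scoped Norms.Operator in
  have : CompleteSpace (Matrix m m 𝕂) := FiniteDimensional.complete 𝕂 _
  -- the `rfl`s identify the operator-norm instances with the plain matrix ones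
  open scoped Norms.Operator in
  convert h.exp_neg_mul_mul_exp_eq_self using 3 <;> rfl

theorem transpose_exp_mul_mul_exp_of_transpose_mul_add_mul_eq_zero {A J : Matrix m m 𝕂}
    (h : Aᵀ * J + J * A = 0) : (NormedSpace.exp A)ᵀ * J * NormedSpace.exp A = J := by
  have hJ : SemiconjBy J A (-Aᵀ) := by
    rw [SemiconjBy, neg_mul, eq_neg_iff_add_eq_zero, add_comm, h]
  simpa only [neg_neg, exp_transpose] using exp_neg_mul_mul_exp_of_semiconjBy hJ

end Matrix

theorem lorentzBoostGen_transpose_mul_add_mul_eq_zero (dx dy dz : ℝ) :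
    (lorentzBoostGen dx dy dz)ᵀ * diagonal ![1, 1, 1, -1] +
      diagonal ![1, 1, 1, -1] * lorentzBoostGen dx dy dz = 0 := by
  ext i j
  fin_cases i <;> fin_cases j <;> simp [lorentzBoostGen, mul_apply, Fin.sum_univ_four]

theorem stmt_5 (dx dy dz : ℝ) :
    (NormedSpace.exp (lorentzBoostGen dx dy dz))ᵀ * Matrix.diagonal ![1, 1, 1, -1] *
        NormedSpace.exp (lorentzBoostGen dx dy dz) =
      Matrix.diagonal ![1, 1, 1, -1] :=
  transpose_exp_mul_mul_exp_of_transpose_mul_add_mul_eq_zero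
    (lorentzBoostGen_transpose_mul_add_mul_eq_zero dx dy dz)
end

section
/- The matrix exponential exp(M) has determinant 1, so exp(M) lies in SO(3,1). -/
open NormedSpace

namespace Matrix

variable {m 𝔸 : Type*} [Fintype m] [DecidableEq m]

section NormedComm

variable [NormedCommRing 𝔸] [NormedAlgebra ℚ 𝔸] [CompleteSpace 𝔸]

theorem det_exp_mul_det_exp_neg (A : Matrix m m 𝔸) : (exp A).det * (exp (-A)).det = 1 := by
  rw [← det_mul, ← exp_add_of_commute _ _ (Commute.refl A).neg_right, add_neg_cancel, exp_zero,
    det_one]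

theorem det_exp_neg_of_conj_eq_neg {A P : Matrix m m 𝔸} (hP : IsUnit P)
    (hA : P * A * P⁻¹ = -A) : (exp (-A)).det = (exp A).det := by
  rw [← hA, exp_conj _ _ hP, det_conj hP]

end NormedComm

theorem det_exp_nonneg (A : Matrix m m ℝ) : 0 ≤ (exp A).det := by
  have hA : A = (2 : ℕ) • ((2 : ℝ)⁻¹ • A) := by
    rw [two_nsmul, ← add_smul, ← two_mul, mul_inv_cancel₀ two_ne_zero, one_smul]
  rw [hA, exp_nsmul, det_pow]
  exact sq_nonneg _

theorem det_exp_eq_one_of_conj_eq_neg {A P : Matrix m m ℝ} (hP : IsUnit P)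
    (hA : P * A * P⁻¹ = -A) : (exp A).det = 1 := by
  have hsq : (exp A).det ^ 2 = 1 := by
    rw [sq]
    nth_rewrite 2 [← det_exp_neg_of_conj_eq_neg hP hA]
    exact det_exp_mul_det_exp_neg A
  exact (pow_eq_one_iff_of_nonneg (det_exp_nonneg A) two_ne_zero).mp hsq

end Matrix

open Matrix

def timeReversal : Matrix (Fin 4) (Fin 4) ℝ := diagonal ![1, 1, 1, -1]

theorem timeReversal_mul_self : timeReversal * timeReversal = 1 := by
  rw [timeReversal, diagonal_mul_diagonal, ← diagonal_one]
  congr 1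
  ext i
  fin_cases i <;> norm_num

theorem timeReversal_conj_lorentzBoostGen (dx dy dz : ℝ) :
    timeReversal * lorentzBoostGen dx dy dz * timeReversal⁻¹ = -lorentzBoostGen dx dy dz := by
  rw [inv_eq_left_inv timeReversal_mul_self, timeReversal]
  ext i j
  fin_cases i <;> fin_cases j <;> simp [lorentzBoostGen, diagonal_mul, mul_diagonal]

theorem stmt_6 (dx dy dz : ℝ) :
    (NormedSpace.exp (lorentzBoostGen dx dy dz)).det = 1 :=
  det_exp_eq_one_of_conj_eq_neg (.of_mul_eq_one _ timeReversal_mul_self)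
    (timeReversal_conj_lorentzBoostGen dx dy dz)
end

section
/- If r ≠ 0, the matrix exponential exp(M) applied to the vector e₄ = (0, 0, 0, 1) yields the vector (sinh(r)·dx/r, sinh(r)·dy/r, sinh(r)·dz/r, cosh(r)). In particular, exp(M) translates the origin of the hyperboloid model to a point of the hyperboloid at hyperbolic distance r. -/
/-!
Write `s = dx² + dy² + dz²` and `r = √s`. The generator `M` sends `e₄` to the spatial vector
`(dx, dy, dz, 0)`, which it sends back to `s • e₄`, so `M² e₄ = r² e₄`. Hence the even powers of
`M` act on `e₄` as `r²ᵏ` and the odd ones as `r²ᵏ M`, and splitting the exponential series into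
even and odd parts gives `exp M e₄ = cosh r • e₄ + (sinh r / r) • M e₄`.
-/

open Matrix

open scoped Nat

namespace Matrix

variable {n : Type*} [Fintype n] [DecidableEq n] {A : Matrix n n ℝ} {v : n → ℝ} {r : ℝ}

theorem pow_even_mulVec_of_sq_mulVec (h : A ^ 2 *ᵥ v = r ^ 2 • v) (k : ℕ) :
    A ^ (2 * k) *ᵥ v = r ^ (2 * k) • v := by
  induction k with
  | zero => simp
  | succ k ih =>
    rw [mul_add, mul_one, pow_add, ← mulVec_mulVec, h, mulVec_smul, ih, smul_smul, pow_add,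
      pow_mul_comm]

theorem pow_odd_mulVec_of_sq_mulVec (h : A ^ 2 *ᵥ v = r ^ 2 • v) (k : ℕ) :
    A ^ (2 * k + 1) *ᵥ v = r ^ (2 * k) • (A *ᵥ v) := by
  rw [pow_succ', ← mulVec_mulVec, pow_even_mulVec_of_sq_mulVec h, mulVec_smul]

theorem hasSum_expSeries_mulVec (A : Matrix n n ℝ) (v : n → ℝ) :
    HasSum (fun k => ((k ! : ℝ)⁻¹ • A ^ k) *ᵥ v) (NormedSpace.exp A *ᵥ v) := by
  -- matrices carry no canonical norm; any normed-algebra structure gives the convergence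
  open scoped Norms.Operator in
  exact (NormedSpace.exp_series_hasSum_exp' (𝕂 := ℝ) A).map (mulVec.addMonoidHomLeft v)
    (continuous_id.matrix_mulVec continuous_const)

theorem exp_mulVec_of_sq_mulVec (hr : r ≠ 0) (h : A ^ 2 *ᵥ v = r ^ 2 • v) :
    NormedSpace.exp A *ᵥ v = Real.cosh r • v + (Real.sinh r / r) • (A *ᵥ v) := by
  refine (hasSum_expSeries_mulVec A v).unique (HasSum.even_add_odd ?_ ?_)
  · convert (Real.hasSum_cosh r).smul_const v using 2 with k
    rw [smul_mulVec, pow_even_mulVec_of_sq_mulVec h, smul_smul, inv_mul_eq_div]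
  · convert ((Real.hasSum_sinh r).div_const r).smul_const (A *ᵥ v) using 2 with k
    rw [smul_mulVec, pow_odd_mulVec_of_sq_mulVec h, smul_smul, pow_succ]
    field_simp

end Matrix

theorem lorentzBoostGen_mulVec_e4 (dx dy dz : ℝ) :
    lorentzBoostGen dx dy dz *ᵥ ![0, 0, 0, 1] = ![dx, dy, dz, 0] := by
  ext i
  fin_cases i <;> simp [lorentzBoostGen, mulVec, dotProduct, Fin.sum_univ_four]

theorem lorentzBoostGen_sq_mulVec_e4 (dx dy dz : ℝ) :
    lorentzBoostGen dx dy dz ^ 2 *ᵥ ![0, 0, 0, 1] =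
      (dx ^ 2 + dy ^ 2 + dz ^ 2) • ![0, 0, 0, 1] := by
  rw [sq, ← mulVec_mulVec, lorentzBoostGen_mulVec_e4]
  ext i
  fin_cases i <;> simp [lorentzBoostGen, mulVec, dotProduct, Fin.sum_univ_four, sq]

theorem stmt_7 (dx dy dz : ℝ) (hr : Real.sqrt (dx ^ 2 + dy ^ 2 + dz ^ 2) ≠ 0) :
    NormedSpace.exp (lorentzBoostGen dx dy dz) *ᵥ ![0, 0, 0, 1] =
      ![Real.sinh (Real.sqrt (dx ^ 2 + dy ^ 2 + dz ^ 2)) * dx /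
          Real.sqrt (dx ^ 2 + dy ^ 2 + dz ^ 2),
        Real.sinh (Real.sqrt (dx ^ 2 + dy ^ 2 + dz ^ 2)) * dy /
          Real.sqrt (dx ^ 2 + dy ^ 2 + dz ^ 2),
        Real.sinh (Real.sqrt (dx ^ 2 + dy ^ 2 + dz ^ 2)) * dz /
          Real.sqrt (dx ^ 2 + dy ^ 2 + dz ^ 2),
        Real.cosh (Real.sqrt (dx ^ 2 + dy ^ 2 + dz ^ 2))] := by
  have hsq : lorentzBoostGen dx dy dz ^ 2 *ᵥ ![0, 0, 0, 1] =
      Real.sqrt (dx ^ 2 + dy ^ 2 + dz ^ 2) ^ 2 • ![0, 0, 0, 1] := by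
    rw [Real.sq_sqrt (by positivity), lorentzBoostGen_sq_mulVec_e4]
  rw [exp_mulVec_of_sq_mulVec hr hsq, lorentzBoostGen_mulVec_e4]
  ext i
  fin_cases i <;> simp [div_mul_eq_mul_div]
end
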